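/- arXiv:1612.05354 — 3 statements merged into one kernel-verified Lean document; each statement's English description precedes it below -/
import Mathlib

section
/- For t ∈ (0,1) and z on the unit circle with z ≠ 1, define log_t|1-z| = -(1/2) ∑_{n≥1} e^{-nt}(zⁿ + z̄ⁿ)/n. Then log|1-z| ≤ t/2 + log_t|1-z|. -/
/-!
Summing the logarithmic series, `log_t |1 - z| = log |1 - e^{-t} z|`. For `|z| = 1`
and real `r` one has `|1 - r z|² = (1 - r)² + r |1 - z|²`, so with `r = e^{-t}` we get
`e^{-t} |1 - z|² ≤ |1 - e^{-t} z|²`, which is the inequality after taking logarithms.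
-/

namespace Complex

lemma hasSum_re_taylorSeries_neg_log {w : ℂ} (hw : ‖w‖ < 1) :
    HasSum (fun n : ℕ ↦ (w ^ (n + 1) / (n + 1)).re) (-Real.log ‖1 - w‖) := by
  simpa only [neg_re, log_re] using hasSum_re (hasSum_taylorSeries_neg_log' hw)

lemma norm_one_sub_ofReal_mul_sq {z : ℂ} (hz : ‖z‖ = 1) (r : ℝ) :
    ‖1 - r * z‖ ^ 2 = (1 - r) ^ 2 + r * ‖1 - z‖ ^ 2 := by
  have hz2 : normSq z = 1 := by rw [← Complex.sq_norm, hz, one_pow]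
  simp only [Complex.sq_norm, normSq_sub, normSq_one, normSq_mul, normSq_ofReal, hz2, one_mul, mul_one,
    conj_re, re_ofReal_mul]
  ring

lemma log_norm_one_sub_le {z : ℂ} (hz : ‖z‖ = 1) (hz1 : z ≠ 1) (t : ℝ) :
    Real.log ‖1 - z‖ ≤ t / 2 + Real.log ‖1 - Real.exp (-t) * z‖ := by
  have hpos : 0 < ‖1 - z‖ := norm_pos_iff.mpr (sub_ne_zero.mpr hz1.symm)
  have hsq : Real.exp (-t) * ‖1 - z‖ ^ 2 ≤ ‖1 - Real.exp (-t) * z‖ ^ 2 := by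
    rw [norm_one_sub_ofReal_mul_sq hz]
    nlinarith [sq_nonneg (1 - Real.exp (-t))]
  have hlog := Real.log_le_log (by positivity) hsq
  rw [Real.log_mul (Real.exp_ne_zero _) (by positivity), Real.log_exp, Real.log_pow,
    Real.log_pow, Nat.cast_ofNat] at hlog
  linarith

end Complex

theorem stmt_2_general (z : ℂ) (hz : ‖z‖ = 1) (hz1 : z ≠ 1) (t : ℝ)
    (ht0 : 0 < t) :
    Real.log ‖1 - z‖ ≤
      t / 2 + (-(1 / 2) * ∑' n : ℕ,
        Real.exp (-((n : ℝ) + 1) * t) * ((z ^ (n + 1) + (starRingEnd ℂ) (z ^ (n + 1))).re)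
          / ((n : ℝ) + 1)) := by
  set w : ℂ := Real.exp (-t) * z
  have hw : ‖w‖ < 1 := by
    rw [norm_mul, Complex.norm_real, Real.norm_of_nonneg (Real.exp_nonneg _), hz, mul_one]
    exact Real.exp_lt_one_iff.mpr (neg_neg_of_pos ht0)
  have hterm (n : ℕ) :
      Real.exp (-((n : ℝ) + 1) * t) * ((z ^ (n + 1) + (starRingEnd ℂ) (z ^ (n + 1))).re)
        / ((n : ℝ) + 1) = 2 * (w ^ (n + 1) / (n + 1)).re := by
    have hpow : w ^ (n + 1) = (Real.exp (-((n : ℝ) + 1) * t) : ℂ) * z ^ (n + 1) := by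
      rw [mul_pow, ← Complex.ofReal_pow, ← Real.exp_nat_mul]
      push_cast
      ring_nf
    rw [hpow, show ((n : ℂ) + 1) = (((n : ℝ) + 1 : ℝ) : ℂ) by push_cast; rfl,
      Complex.div_ofReal_re, Complex.re_ofReal_mul, Complex.add_re, Complex.conj_re]
    ring
  rw [tsum_congr hterm, ((Complex.hasSum_re_taylorSeries_neg_log hw).mul_left 2).tsum_eq]
  linarith [Complex.log_norm_one_sub_le hz hz1 t]

theorem stmt_2 (z : ℂ) (hz : ‖z‖ = 1) (hz1 : z ≠ 1) (t : ℝ)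
    (ht0 : 0 < t) (ht1 : t < 1) :
    Real.log ‖1 - z‖ ≤
      t / 2 + (-(1 / 2) * ∑' n : ℕ,
        Real.exp (-((n : ℝ) + 1) * t) * ((z ^ (n + 1) + (starRingEnd ℂ) (z ^ (n + 1))).re)
          / ((n : ℝ) + 1)) :=
  stmt_2_general z hz hz1 t ht0
end

section
/- Let α be an algebraic integer, p a rational prime, x > 0, and let L be the largest natural number with p^L ≤ x. If n is the number of prime ideals 𝔭 of the ring of integers of ℚ(α) lying above p with N(𝔭) ≤ x, then p^n divides N_{ℚ(α)/ℚ}(α^{p^{L!}} - α) (in particular p^n ≤ |N(α)|·|N(α^{p^{L!}-1} - 1)| when α is not a root of this expression's vanishing). -/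
/-!
Every prime `𝔭` above `p` has norm `p ^ f` with `f ≥ 1`, and its residue field is the finite
field with `p ^ f` elements, on which `t ↦ t ^ p ^ f` is the identity. If `N(𝔭) ≤ x`
then `f ≤ L`, so `f ∣ L !` and `α ^ p ^ L ! ≡ α (mod 𝔭)`. These primes are pairwise
coprime, so their product divides `(α ^ p ^ L ! - α)`; taking norms, each contributes at
least one factor `p`.
-/

open NumberField

namespace Ideal

theorem pow_pow_sub_mem_of_card_quotient_eq {R : Type*} [CommRing R] (P : Ideal R)
    [P.IsMaximal] [Finite (R ⧸ P)] {q f n : ℕ} (hcard : Nat.card (R ⧸ P) = q ^ f)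
    (hfn : f ∣ n) (a : R) : a ^ q ^ n - a ∈ P := by
  let := Quotient.field P
  let := Fintype.ofFinite (R ⧸ P)
  obtain ⟨k, rfl⟩ := hfn
  rw [← Quotient.eq_zero_iff_mem, map_sub, map_pow, pow_mul, ← hcard,
    Nat.card_eq_fintype_card, FiniteField.pow_card_pow, sub_self]

variable {S : Type*} [CommRing S] [IsDedekindDomain S] [Module.Free ℤ S] [Module.Finite ℤ S]

theorem exists_absNorm_eq_pow_of_natCast_mem {P : Ideal S} [hP : P.IsPrime] {p : ℕ}
    (hp : p.Prime) (hpP : (p : S) ∈ P) : ∃ f, 0 < f ∧ absNorm P = p ^ f := by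
  have hdvd : absNorm P ∣ p ^ Module.finrank ℤ S :=
    absNorm_span_natCast (S := S) p ▸
      absNorm_dvd_absNorm_of_le ((span_singleton_le_iff_mem _).mpr hpP)
  obtain ⟨f, -, hf⟩ := (Nat.dvd_prime_pow hp).mp hdvd
  refine ⟨f, Nat.pos_of_ne_zero ?_, hf⟩
  rintro rfl
  exact hP.ne_top (absNorm_eq_one_iff.mp hf)

theorem isMaximal_of_natCast_mem {P : Ideal S} [hP : P.IsPrime] {p : ℕ} (hp : p.Prime)
    (hpP : (p : S) ∈ P) : P.IsMaximal := by
  obtain ⟨f, -, hf⟩ := exists_absNorm_eq_pow_of_natCast_mem hp hpP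
  refine hP.isMaximal fun hbot ↦ ?_
  rw [hbot, absNorm_bot] at hf
  exact pow_ne_zero f hp.ne_zero hf.symm

theorem pow_pow_factorial_sub_mem {P : Ideal S} [P.IsPrime] {p : ℕ} (hp : p.Prime)
    (hpP : (p : S) ∈ P) {x : ℝ} {L : ℕ} (hL : ∀ m : ℕ, (p : ℝ) ^ m ≤ x → m ≤ L)
    (hPx : (absNorm P : ℝ) ≤ x) (a : S) : a ^ p ^ L.factorial - a ∈ P := by
  obtain ⟨f, hf0, hf⟩ := exists_absNorm_eq_pow_of_natCast_mem hp hpP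
  have hfL : f ≤ L := hL f (by exact_mod_cast hf ▸ hPx)
  have := isMaximal_of_natCast_mem hp hpP
  have : Finite (S ⧸ P) := (absNorm_ne_zero_iff P).mp (hf ▸ pow_ne_zero f hp.ne_zero)
  refine pow_pow_sub_mem_of_card_quotient_eq P ?_ (Nat.dvd_factorial hf0 hfL) a
  rw [← hf, absNorm_apply, Submodule.cardQuot_apply]

theorem prod_absNorm_dvd_norm_of_forall_mem {s : Finset (Ideal S)}
    (hs : ∀ P ∈ s, P.IsMaximal) {b : S} (hb : ∀ P ∈ s, b ∈ P) :
    ((∏ P ∈ s, absNorm P : ℕ) : ℤ) ∣ Algebra.norm ℤ b := by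
  rw [← map_prod]
  refine absNorm_dvd_norm_of_mem ?_
  rw [prod_eq_iInf_of_pairwise_isCoprime fun P hP Q hQ hPQ ↦
    isCoprime_iff_sup_eq.mpr ((hs P hP).coprime_of_ne (hs Q hQ) hPQ)]
  simpa only [Submodule.mem_iInf] using hb

theorem prime_pow_card_dvd_norm {p : ℕ} (hp : p.Prime) {s : Finset (Ideal S)}
    (hs : ∀ P ∈ s, P.IsPrime ∧ (p : S) ∈ P) {b : S} (hb : ∀ P ∈ s, b ∈ P) :
    (p : ℤ) ^ s.card ∣ Algebra.norm ℤ b := by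
  have hmax : ∀ P ∈ s, P.IsMaximal := fun P hP ↦
    have := (hs P hP).1; isMaximal_of_natCast_mem hp (hs P hP).2
  refine dvd_trans ?_ (prod_absNorm_dvd_norm_of_forall_mem hmax hb)
  rw [← Finset.prod_const, Nat.cast_prod]
  refine Finset.prod_dvd_prod_of_dvd _ _ fun P hP ↦ ?_
  have := (hs P hP).1
  obtain ⟨f, hf0, hf⟩ := exists_absNorm_eq_pow_of_natCast_mem hp (hs P hP).2
  rw [hf, Nat.cast_pow]
  exact dvd_pow_self _ hf0.ne'

end Ideal

theorem stmt_5_general (K : Type*) [Field K] [NumberField K] (α : 𝓞 K)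
    (p : ℕ) (hp : p.Prime) (x : ℝ)
    (L : ℕ) (hL2 : ∀ m : ℕ, (p : ℝ) ^ m ≤ x → m ≤ L) :
    (p : ℤ) ^ ({𝔭 : Ideal (𝓞 K) | 𝔭.IsPrime ∧ (p : 𝓞 K) ∈ 𝔭 ∧
          (Ideal.absNorm 𝔭 : ℝ) ≤ x}.ncard)
        ∣ Algebra.norm ℤ (α ^ p ^ (Nat.factorial L) - α) ∧
    (Algebra.norm ℤ (α ^ p ^ (Nat.factorial L) - α) ≠ 0 →
      (p : ℤ) ^ ({𝔭 : Ideal (𝓞 K) | 𝔭.IsPrime ∧ (p : 𝓞 K) ∈ 𝔭 ∧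
          (Ideal.absNorm 𝔭 : ℝ) ≤ x}.ncard)
        ≤ |Algebra.norm ℤ α| * |Algebra.norm ℤ (α ^ (p ^ (Nat.factorial L) - 1) - 1)|) := by
  set T := {𝔭 : Ideal (𝓞 K) | 𝔭.IsPrime ∧ (p : 𝓞 K) ∈ 𝔭 ∧
    (Ideal.absNorm 𝔭 : ℝ) ≤ x}
  have hT : T.Finite := (Ideal.finite_setOfPred_absNorm_le ⌈x⌉₊).subset fun 𝔭 h𝔭 ↦
    Nat.cast_le.mp (h𝔭.2.2.trans (Nat.le_ceil x))
  have hdvd : (p : ℤ) ^ T.ncard ∣ Algebra.norm ℤ (α ^ p ^ L.factorial - α) := by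
    rw [Set.ncard_eq_toFinset_card T hT]
    refine Ideal.prime_pow_card_dvd_norm hp (fun 𝔭 h𝔭 ↦ ?_) fun 𝔭 h𝔭 ↦ ?_
    · obtain ⟨h𝔭, hp𝔭, -⟩ := hT.mem_toFinset.mp h𝔭
      exact ⟨h𝔭, hp𝔭⟩
    · obtain ⟨h𝔭, hp𝔭, h𝔭x⟩ := hT.mem_toFinset.mp h𝔭
      exact Ideal.pow_pow_factorial_sub_mem hp hp𝔭 hL2 h𝔭x α
  refine ⟨hdvd, fun hne ↦ ?_⟩
  calc (p : ℤ) ^ T.ncard ≤ |Algebra.norm ℤ (α ^ p ^ L.factorial - α)| :=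
        Int.le_of_dvd (abs_pos.mpr hne) ((dvd_abs _ _).mpr hdvd)
    _ = _ := by
      rw [← abs_mul, ← map_mul, mul_sub_one, mul_pow_sub_one (pow_ne_zero _ hp.ne_zero)]

theorem stmt_5 (K : Type*) [Field K] [NumberField K] (α : 𝓞 K)
    (p : ℕ) (hp : p.Prime) (x : ℝ) (hx : 0 < x)
    (L : ℕ) (hL1 : (p : ℝ) ^ L ≤ x) (hL2 : ∀ m : ℕ, (p : ℝ) ^ m ≤ x → m ≤ L) :
    (p : ℤ) ^ ({𝔭 : Ideal (𝓞 K) | 𝔭.IsPrime ∧ (p : 𝓞 K) ∈ 𝔭 ∧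
          (Ideal.absNorm 𝔭 : ℝ) ≤ x}.ncard)
        ∣ Algebra.norm ℤ (α ^ p ^ (Nat.factorial L) - α) ∧
    (Algebra.norm ℤ (α ^ p ^ (Nat.factorial L) - α) ≠ 0 →
      (p : ℤ) ^ ({𝔭 : Ideal (𝓞 K) | 𝔭.IsPrime ∧ (p : 𝓞 K) ∈ 𝔭 ∧
          (Ideal.absNorm 𝔭 : ℝ) ≤ x}.ncard)
        ≤ |Algebra.norm ℤ α| * |Algebra.norm ℤ (α ^ (p ^ (Nat.factorial L) - 1) - 1)|) :=
  stmt_5_general K α p hp x L hL2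
end

section
/- Let (k_i) be a sequence of number fields such that for every x > 0 the prime counting function satisfies π_{k_i}(x) = o([k_i:ℚ]). Then for every real σ > 1 and every s with Re(s) ≥ σ, one has |ζ_{k_i}(s)| = exp(o_σ([k_i:ℚ])), i.e., log|ζ_{k_i}(s)| / [k_i:ℚ] → 0 uniformly in such s. -/
/-!
Write `log |ζ_k(s)| = Re ∑_𝔭 -log (1 - N𝔭^{-s})` and bound the `𝔭`-term by `(3/2) N𝔭^{-σ}`,
using `N𝔭 ≥ 2`. At most `[k:ℚ]` prime ideals have a given norm `m` (their product divides `(m)`),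
so `∑_𝔭 N𝔭^{-τ} ≤ [k:ℚ] ζ(τ)` for every `τ > 1`. Fix `1 < τ < σ` and a cutoff `T`: the primes of
norm at most `T` contribute at most `1` each, hence `π_k(T) = o([k:ℚ])` in total, while the others
contribute at most `(3/2) T^{τ-σ} [k:ℚ] ζ(τ)`, which is a small multiple of `[k:ℚ]` once `T` is
large.
-/

open NumberField Filter

namespace Complex

lemma abs_log_norm_tprod_inv_one_sub_le {ι : Type*} {f : ι → ℂ} (hf : Summable f)
    (hf1 : ∀ i, f i ≠ 1) :
    |Real.log ‖∏' i, (1 - f i)⁻¹‖| ≤ ∑' i, ‖log (1 - f i)‖ := by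
  have hlog := hf.clog_one_sub
  have hprod : ∏' i, (1 - f i)⁻¹ = exp (∑' i, -log (1 - f i)) := by
    rw [← hlog.neg.hasSum.cexp.tprod_eq]
    congr with i
    rw [Function.comp_apply, exp_neg, exp_log (sub_ne_zero.mpr (hf1 i).symm)]
  rw [hprod, norm_exp, Real.log_exp]
  calc |(∑' i, -log (1 - f i)).re| ≤ ‖∑' i, -log (1 - f i)‖ := abs_re_le_norm _
    _ ≤ ∑' i, ‖-log (1 - f i)‖ := norm_tsum_le_tsum_norm (summable_norm_iff.mpr hlog.neg)
    _ = ∑' i, ‖log (1 - f i)‖ := by simp only [norm_neg]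

lemma norm_log_one_sub_le {z : ℂ} (hz : ‖z‖ ≤ 1 / 2) : ‖log (1 - z)‖ ≤ 3 / 2 * ‖z‖ := by
  simpa [sub_eq_add_neg] using norm_log_one_add_half_le_self (z := -z) (by simpa using hz)

end Complex

abbrev NonzeroPrimeIdeal (S : Type*) [CommRing S] : Type _ := {I : Ideal S // I.IsPrime ∧ I ≠ ⊥}

namespace NonzeroPrimeIdeal

variable {S : Type*} [CommRing S] [IsDedekindDomain S] [Module.Free ℤ S] [Module.Finite ℤ S]

lemma two_le_absNorm (𝔭 : NonzeroPrimeIdeal S) : 2 ≤ Ideal.absNorm 𝔭.1 := by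
  have h0 : Ideal.absNorm 𝔭.1 ≠ 0 := Ideal.absNorm_eq_zero_iff.not.mpr 𝔭.2.2
  have h1 : Ideal.absNorm 𝔭.1 ≠ 1 := Ideal.absNorm_eq_one_iff.not.mpr 𝔭.2.1.ne_top
  omega

lemma card_le_finrank_of_absNorm_eq {m : ℕ} {v : Finset (NonzeroPrimeIdeal S)}
    (hv : ∀ 𝔭 ∈ v, Ideal.absNorm 𝔭.1 = m) : v.card ≤ Module.finrank ℤ S := by
  obtain rfl | ⟨𝔭₀, h𝔭₀⟩ := v.eq_empty_or_nonempty
  · simp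
  have hm : 1 < m := hv 𝔭₀ h𝔭₀ ▸ two_le_absNorm 𝔭₀
  have hdvd : ∏ 𝔭 ∈ v, 𝔭.1 ∣ Ideal.span {(m : S)} := by
    refine Finset.prod_dvd_of_coprime (fun 𝔭 _ 𝔮 _ hne => ?_) fun 𝔭 h𝔭 => ?_
    · exact Ideal.isCoprime_iff_sup_eq.mpr <| (𝔭.2.1.isMaximal 𝔭.2.2).coprime_of_ne
        (𝔮.2.1.isMaximal 𝔮.2.2) (Subtype.coe_injective.ne hne)
    · rw [Ideal.dvd_iff_le, Ideal.span_singleton_le_iff_mem, ← hv 𝔭 h𝔭]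
      exact Ideal.absNorm_mem 𝔭.1
  have hnorm : m ^ v.card ∣ m ^ Module.finrank ℤ S := by
    rw [← Ideal.absNorm_span_natCast, ← Finset.prod_const, ← Finset.prod_congr rfl hv,
      ← map_prod]
    exact Ideal.absNorm_dvd_absNorm_of_le (Ideal.le_of_dvd hdvd)
  exact (Nat.pow_dvd_pow_iff_le_right hm).mp hnorm

lemma sum_comp_absNorm_le {g : ℕ → ℝ} (hg : 0 ≤ g) (hgs : Summable g)
    (u : Finset (NonzeroPrimeIdeal S)) :
    ∑ 𝔭 ∈ u, g (Ideal.absNorm 𝔭.1) ≤ Module.finrank ℤ S * ∑' m, g m := by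
  classical
  calc ∑ 𝔭 ∈ u, g (Ideal.absNorm 𝔭.1)
      = ∑ m ∈ u.image fun 𝔭 : NonzeroPrimeIdeal S => Ideal.absNorm 𝔭.1,
          ((u.filter fun 𝔭 => Ideal.absNorm 𝔭.1 = m).card : ℝ) * g m := by
        rw [← Finset.sum_fiberwise_of_maps_to fun 𝔭 h =>
          Finset.mem_image_of_mem (fun 𝔭 : NonzeroPrimeIdeal S => Ideal.absNorm 𝔭.1) h]
        refine Finset.sum_congr rfl fun m _ => ?_
        rw [Finset.sum_congr rfl fun 𝔭 h => congrArg g (Finset.mem_filter.mp h).2,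
          Finset.sum_const, nsmul_eq_mul]
    _ ≤ ∑ m ∈ u.image fun 𝔭 : NonzeroPrimeIdeal S => Ideal.absNorm 𝔭.1,
          (Module.finrank ℤ S : ℝ) * g m := by
        gcongr with m
        · exact hg m
        · exact card_le_finrank_of_absNorm_eq fun 𝔭 h => (Finset.mem_filter.mp h).2
    _ ≤ Module.finrank ℤ S * ∑' m, g m := by
        rw [← Finset.mul_sum]
        gcongr
        exact hgs.sum_le_tsum _ fun m _ => hg m

lemma summable_rpow_neg_absNorm {t : ℝ} (ht : 1 < t) :
    Summable fun 𝔭 : NonzeroPrimeIdeal S => (Ideal.absNorm 𝔭.1 : ℝ) ^ (-t) :=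
  summable_of_sum_le (fun _ => by positivity)
    (sum_comp_absNorm_le (g := fun m : ℕ => (m : ℝ) ^ (-t)) (fun _ => by positivity)
      (Real.summable_nat_rpow.mpr (by linarith)))

lemma norm_absNorm_cpow_neg_le {σ : ℝ} {s : ℂ} (hs : σ ≤ s.re) (𝔭 : NonzeroPrimeIdeal S) :
    ‖(Ideal.absNorm 𝔭.1 : ℂ) ^ (-s)‖ ≤ (Ideal.absNorm 𝔭.1 : ℝ) ^ (-σ) := by
  have h2 := two_le_absNorm 𝔭
  rw [Complex.norm_natCast_cpow_of_pos (by omega), Complex.neg_re]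
  exact Real.rpow_le_rpow_of_exponent_le (Nat.one_le_cast.mpr (by omega)) (neg_le_neg hs)

lemma rpow_neg_absNorm_le_half {σ : ℝ} (hσ : 1 ≤ σ) (𝔭 : NonzeroPrimeIdeal S) :
    (Ideal.absNorm 𝔭.1 : ℝ) ^ (-σ) ≤ 1 / 2 := by
  have h2 : (2 : ℝ) ≤ Ideal.absNorm 𝔭.1 := by exact_mod_cast two_le_absNorm 𝔭
  calc (Ideal.absNorm 𝔭.1 : ℝ) ^ (-σ) ≤ (Ideal.absNorm 𝔭.1 : ℝ) ^ (-1 : ℝ) :=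
        Real.rpow_le_rpow_of_exponent_le (by linarith) (neg_le_neg hσ)
    _ ≤ 1 / 2 := by
        rw [Real.rpow_neg_one, one_div]
        exact inv_anti₀ two_pos h2

lemma norm_log_one_sub_absNorm_cpow_le {σ τ T : ℝ} (hσ : 1 ≤ σ) (hτσ : τ ≤ σ) (hT : 0 < T)
    {s : ℂ} (hs : σ ≤ s.re) (𝔭 : NonzeroPrimeIdeal S) :
    ‖Complex.log (1 - (Ideal.absNorm 𝔭.1 : ℂ) ^ (-s))‖ ≤
      (if (Ideal.absNorm 𝔭.1 : ℝ) ≤ T then 1 else 0) +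
        3 / 2 * T ^ (τ - σ) * (Ideal.absNorm 𝔭.1 : ℝ) ^ (-τ) := by
  set n : ℝ := (Ideal.absNorm 𝔭.1 : ℝ)
  have hn : 0 < n := by have := two_le_absNorm 𝔭; positivity
  have hz := norm_absNorm_cpow_neg_le hs 𝔭
  have hhalf := rpow_neg_absNorm_le_half hσ 𝔭
  have hlog := Complex.norm_log_one_sub_le (hz.trans hhalf)
  split_ifs with hnT
  · have : 0 ≤ 3 / 2 * T ^ (τ - σ) * n ^ (-τ) := by positivity
    linarith
  · have hlarge : n ^ (-σ) ≤ T ^ (τ - σ) * n ^ (-τ) := by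
      calc n ^ (-σ) = n ^ (τ - σ) * n ^ (-τ) := by rw [← Real.rpow_add hn]; ring_nf
        _ ≤ T ^ (τ - σ) * n ^ (-τ) := by
          gcongr ?_ * _
          exact Real.rpow_le_rpow_of_nonpos hT (not_le.mp hnT).le (by linarith)
    linarith

lemma card_filter_absNorm_le_ncard [CharZero S] {T : ℝ} (u : Finset (NonzeroPrimeIdeal S)) :
    ((u.filter fun 𝔭 => (Ideal.absNorm 𝔭.1 : ℝ) ≤ T).card) ≤
      {𝔭 : Ideal S | 𝔭.IsPrime ∧ 𝔭 ≠ ⊥ ∧ (Ideal.absNorm 𝔭 : ℝ) ≤ T}.ncard := by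
  have hfin : {𝔭 : Ideal S | 𝔭.IsPrime ∧ 𝔭 ≠ ⊥ ∧ (Ideal.absNorm 𝔭 : ℝ) ≤ T}.Finite :=
    (Ideal.finite_setOfPred_absNorm_le ⌊T⌋₊).subset fun I hI => Nat.le_floor hI.2.2
  rw [← Set.ncard_coe_finset]
  refine Set.ncard_le_ncard_of_injOn Subtype.val (fun 𝔭 h => ?_) Subtype.val_injective.injOn hfin
  simp only [Finset.coe_filter, Set.mem_ofPred_eq] at h
  exact ⟨𝔭.2.1, 𝔭.2.2, h.2⟩

lemma abs_log_norm_eulerProduct_le [CharZero S] {σ τ T : ℝ} (hτ : 1 < τ) (hτσ : τ ≤ σ)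
    (hT : 0 < T) {s : ℂ} (hs : σ ≤ s.re) :
    |Real.log ‖∏' 𝔭 : NonzeroPrimeIdeal S, (1 - (Ideal.absNorm 𝔭.1 : ℂ) ^ (-s))⁻¹‖| ≤
      {𝔭 : Ideal S | 𝔭.IsPrime ∧ 𝔭 ≠ ⊥ ∧ (Ideal.absNorm 𝔭 : ℝ) ≤ T}.ncard +
        3 / 2 * T ^ (τ - σ) * (∑' m : ℕ, (m : ℝ) ^ (-τ)) * Module.finrank ℤ S := by
  have hσ : 1 ≤ σ := by linarith
  have hsum : Summable fun 𝔭 : NonzeroPrimeIdeal S => (Ideal.absNorm 𝔭.1 : ℂ) ^ (-s) :=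
    .of_norm_bounded (summable_rpow_neg_absNorm (by linarith)) (norm_absNorm_cpow_neg_le hs)
  have hne (𝔭 : NonzeroPrimeIdeal S) : (Ideal.absNorm 𝔭.1 : ℂ) ^ (-s) ≠ 1 := fun h => by
    have := (norm_absNorm_cpow_neg_le hs 𝔭).trans (rpow_neg_absNorm_le_half hσ 𝔭)
    norm_num [h] at this
  refine (Complex.abs_log_norm_tprod_inv_one_sub_le hsum hne).trans <|
    Real.tsum_le_of_sum_le (fun _ => norm_nonneg _) fun u => ?_
  calc _ ≤ ∑ 𝔭 ∈ u, ((if (Ideal.absNorm 𝔭.1 : ℝ) ≤ T then 1 else 0) +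
        3 / 2 * T ^ (τ - σ) * (Ideal.absNorm 𝔭.1 : ℝ) ^ (-τ)) :=
        Finset.sum_le_sum fun 𝔭 _ => norm_log_one_sub_absNorm_cpow_le hσ hτσ hT hs 𝔭
    _ = (u.filter fun 𝔭 => (Ideal.absNorm 𝔭.1 : ℝ) ≤ T).card +
        3 / 2 * T ^ (τ - σ) * ∑ 𝔭 ∈ u, (Ideal.absNorm 𝔭.1 : ℝ) ^ (-τ) := by
        rw [Finset.sum_add_distrib, Finset.sum_boole, Finset.mul_sum]
    _ ≤ _ := by
        rw [mul_assoc _ (∑' m : ℕ, _), mul_comm (∑' m : ℕ, _)]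
        gcongr
        · exact_mod_cast card_filter_absNorm_le_ncard u
        · exact sum_comp_absNorm_le (g := fun m : ℕ => (m : ℝ) ^ (-τ)) (fun _ => by positivity)
            (Real.summable_nat_rpow.mpr (by linarith)) u

end NonzeroPrimeIdeal

/-- If the prime counting functions of a sequence of number fields satisfy
`π_{k_i}(x) = o([k_i:ℚ])` for every `x > 0`, then for every `σ > 1`, uniformly in `s` with
`Re s ≥ σ`, `log |ζ_{k_i}(s)| = o_σ([k_i:ℚ])`, where the Dedekind zeta function is given by
its Euler product. -/
theorem stmt_6 (K : ℕ → Type) [∀ i, Field (K i)] [∀ i, NumberField (K i)]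
    (hπ : ∀ x : ℝ, 0 < x →
      Tendsto (fun i =>
        ({𝔭 : Ideal (𝓞 (K i)) | 𝔭.IsPrime ∧ 𝔭 ≠ ⊥ ∧ (Ideal.absNorm 𝔭 : ℝ) ≤ x}.ncard : ℝ)
          / (Module.finrank ℚ (K i) : ℝ)) atTop (nhds 0))
    (σ : ℝ) (hσ : 1 < σ) :
    ∀ ε : ℝ, 0 < ε → ∃ N : ℕ, ∀ i ≥ N, ∀ s : ℂ, σ ≤ s.re →
      |Real.log ‖
          (∏' 𝔭 : {I : Ideal (𝓞 (K i)) // I.IsPrime ∧ I ≠ ⊥},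
            (1 - (Ideal.absNorm (𝔭 : Ideal (𝓞 (K i))) : ℂ) ^ (-s))⁻¹)‖|
        ≤ ε * (Module.finrank ℚ (K i) : ℝ) := by
  intro ε hε
  obtain ⟨τ, hτ, hτσ⟩ := exists_between hσ
  obtain ⟨T, hT, hTail⟩ : ∃ T : ℝ, 0 < T ∧
      3 / 2 * T ^ (τ - σ) * ∑' m : ℕ, (m : ℝ) ^ (-τ) ≤ ε / 2 := by
    have h : Tendsto (fun T : ℝ => 3 / 2 * T ^ (τ - σ) * ∑' m : ℕ, (m : ℝ) ^ (-τ))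
        atTop (nhds 0) := by
      simpa [neg_sub] using
        ((tendsto_rpow_neg_atTop (sub_pos.mpr hτσ)).const_mul (3 / 2)).mul_const
          (∑' m : ℕ, (m : ℝ) ^ (-τ))
    exact ((eventually_gt_atTop 0).and (h.eventually_le_const (half_pos hε))).exists
  obtain ⟨N, hN⟩ := eventually_atTop.mp ((hπ T hT).eventually_le_const (half_pos hε))
  refine ⟨N, fun i hi s hs => ?_⟩
  have hn : (0 : ℝ) < Module.finrank ℚ (K i) := by exact_mod_cast Module.finrank_pos
  have hEuler := NonzeroPrimeIdeal.abs_log_norm_eulerProduct_le (S := 𝓞 (K i)) hτ hτσ.le hT hs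
  rw [RingOfIntegers.rank] at hEuler
  calc _ ≤ _ := hEuler
    _ ≤ ε / 2 * Module.finrank ℚ (K i) + ε / 2 * Module.finrank ℚ (K i) :=
        add_le_add ((div_le_iff₀ hn).mp (hN i hi)) (mul_le_mul_of_nonneg_right hTail hn.le)
    _ = ε * Module.finrank ℚ (K i) := by ring
end
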